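/- arXiv:1802.08376 — 6 statements merged into one kernel-verified Lean document; each statement's English description precedes it below -/
import Mathlib

section
/- Let 𝒱 be a finite set, f a non-increasing set function on 𝒱, γ ∈ (0,1] a supermodularity-ratio lower bound for f, and c a cost function on 𝒱. Let S* be a nonempty subset of 𝒱 with total cost b* = c(S*), and let s₁, …, s_m be a greedy sequence for (f, c) with G_i = {s₁,…,s_i}. Then for every i ∈ {1, …, m}: f(G_{i−1}) − f(G_i) ≥ (γ·c(s_i)/b*)·(f(G_{i−1}) − f(S*)). -/
open Finset Real

/-! With `G = G_i` and `δ` the greedy gain at step `i`, the supermodularity ratio bounds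
`γ (f G - f (G ∪ S*))` by the sum of the single-element gains at `G` over `S*`, and the greedy
choice bounds the gain of each `v` by `c v · δ / c (s i)`; monotonicity replaces `f (G ∪ S*)`
by `f S*`. -/

/-- Summing the supermodularity-ratio inequality along any enumeration of `T` telescopes. -/
lemma mul_sub_union_le_sum_sub_insert {α : Type*} [DecidableEq α]
    (f : Finset α → ℝ) (γ : ℝ)
    (hratio : ∀ A B : Finset α, A ⊆ B → ∀ v ∉ B,
      f A - f (insert v A) ≥ γ * (f B - f (insert v B)))
    (G T : Finset α) :
    γ * (f G - f (G ∪ T)) ≤ ∑ v ∈ T, (f G - f (insert v G)) := by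
  induction T using Finset.induction_on with
  | empty => simp
  | @insert v T hvT ih =>
    rw [sum_insert hvT, union_insert]
    by_cases hv : v ∈ G ∪ T
    · have hvG : v ∈ G := (mem_union.1 hv).resolve_right hvT
      rw [insert_eq_of_mem hv, insert_eq_of_mem hvG]
      linarith
    · have := hratio G (G ∪ T) subset_union_left v hv
      linarith

lemma sum_sub_insert_le_of_greedy {α : Type*} [DecidableEq α]
    (f : Finset α → ℝ) (c : α → ℝ) (hc : ∀ v, 0 < c v) (G T : Finset α) (a : α)
    (hgain : 0 ≤ f G - f (insert a G))
    (hgreedy : ∀ v ∉ G,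
      (f G - f (insert v G)) / c v ≤ (f G - f (insert a G)) / c a) :
    ∑ v ∈ T, (f G - f (insert v G)) ≤
      (∑ v ∈ T, c v) * ((f G - f (insert a G)) / c a) := by
  rw [sum_mul]
  refine sum_le_sum fun v _ => ?_
  by_cases hv : v ∈ G
  · rw [insert_eq_of_mem hv, sub_self]
    have := hc a
    have := hc v
    positivity
  · rw [mul_comm]
    exact (div_le_iff₀ (hc v)).1 (hgreedy v hv)

theorem stmt_2_general {α : Type*} [DecidableEq α]
    (f : Finset α → ℝ)
    -- `f` is non-increasing
    (hmono : ∀ A B : Finset α, A ⊆ B → f B ≤ f A)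
    -- `γ ∈ (0,1]` is a supermodularity-ratio lower bound for `f`
    (γ : ℝ) (hγ0 : 0 < γ)
    (hratio : ∀ A B : Finset α, A ⊆ B → ∀ v ∉ B,
      f A - f (insert v A) ≥ γ * (f B - f (insert v B)))
    -- positive costs
    (c : α → ℝ) (hc : ∀ v, 0 < c v)
    -- a nonempty set `Sstar` with total cost `b* = ∑ v ∈ Sstar, c v`
    (Sstar : Finset α)
    -- a greedy sequence of length `m`: pairwise-distinct elements, each maximizing
    -- the cost-normalized marginal gain over all elements outside the current set
    (m : ℕ) (s : ℕ → α)
    (hgreedy : ∀ i < m, ∀ a ∉ (Finset.range i).image s,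
      (f ((Finset.range i).image s) - f (insert a ((Finset.range i).image s))) / c a ≤
        (f ((Finset.range i).image s) -
            f (insert (s i) ((Finset.range i).image s))) / c (s i)) :
    ∀ i < m,
      f ((Finset.range i).image s) - f ((Finset.range (i + 1)).image s) ≥
        γ * c (s i) / (∑ v ∈ Sstar, c v) *
          (f ((Finset.range i).image s) - f Sstar) := by
  intro i hi
  set G := (range i).image s
  have hnext : (range (i + 1)).image s = insert (s i) G := by
    rw [range_add_one, image_insert]
  have hgain : 0 ≤ f G - f (insert (s i) G) := sub_nonneg.2 (hmono _ _ (subset_insert _ _))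
  have hkey : γ * (f G - f Sstar) ≤
      (∑ v ∈ Sstar, c v) * ((f G - f (insert (s i) G)) / c (s i)) :=
    calc γ * (f G - f Sstar) ≤ γ * (f G - f (G ∪ Sstar)) := by
          gcongr; exact hmono _ _ subset_union_right
      _ ≤ ∑ v ∈ Sstar, (f G - f (insert v G)) :=
          mul_sub_union_le_sum_sub_insert f γ hratio G Sstar
      _ ≤ _ := sum_sub_insert_le_of_greedy f c hc G Sstar (s i) hgain (hgreedy i hi)
  rw [hnext, ge_iff_le, div_mul_eq_mul_div]
  -- `div_le_of_le_mul₀` also covers `Sstar = ∅`, where the division is by zero.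
  refine div_le_of_le_mul₀ (sum_nonneg fun v _ => (hc v).le) hgain ?_
  have := hc (s i)
  calc γ * c (s i) * (f G - f Sstar) = c (s i) * (γ * (f G - f Sstar)) := by ring
    _ ≤ c (s i) * ((∑ v ∈ Sstar, c v) * ((f G - f (insert (s i) G)) / c (s i))) := by
        gcongr
    _ = (f G - f (insert (s i) G)) * ∑ v ∈ Sstar, c v := by field_simp

/-- generalization of Krause–Guestrin Lemma 2: lower bound on the marginal
gain of each greedy step, against any nonempty set `Sstar` with total cost `b* = c(Sstar)`.
The greedy sequence is zero-indexed: `s 0, s 1, …, s (m-1)`, with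
`G i = {s 0, …, s (i-1)} = (range i).image s`. -/
theorem stmt_2 {α : Type*} [Fintype α] [DecidableEq α]
    (f : Finset α → ℝ)
    -- `f` is non-increasing
    (hmono : ∀ A B : Finset α, A ⊆ B → f B ≤ f A)
    -- `γ ∈ (0,1]` is a supermodularity-ratio lower bound for `f`
    (γ : ℝ) (hγ0 : 0 < γ) (hγ1 : γ ≤ 1)
    (hratio : ∀ A B : Finset α, A ⊆ B → ∀ v ∉ B,
      f A - f (insert v A) ≥ γ * (f B - f (insert v B)))
    -- positive costs
    (c : α → ℝ) (hc : ∀ v, 0 < c v)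
    -- a nonempty set `Sstar` with total cost `b* = ∑ v ∈ Sstar, c v`
    (Sstar : Finset α) (hSstar : Sstar.Nonempty)
    -- a greedy sequence of length `m`: pairwise-distinct elements, each maximizing
    -- the cost-normalized marginal gain over all elements outside the current set
    (m : ℕ) (s : ℕ → α)
    (hdist : ∀ i < m, s i ∉ (Finset.range i).image s)
    (hgreedy : ∀ i < m, ∀ a ∉ (Finset.range i).image s,
      (f ((Finset.range i).image s) - f (insert a ((Finset.range i).image s))) / c a ≤
        (f ((Finset.range i).image s) -
            f (insert (s i) ((Finset.range i).image s))) / c (s i)) :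
    ∀ i < m,
      f ((Finset.range i).image s) - f ((Finset.range (i + 1)).image s) ≥
        γ * c (s i) / (∑ v ∈ Sstar, c v) *
          (f ((Finset.range i).image s) - f Sstar) :=
  stmt_2_general f hmono γ hγ0 hratio c hc Sstar m s hgreedy
end

section
/- Let 𝒱 be a finite set, f a non-increasing set function on 𝒱, γ ∈ (0,1] a supermodularity-ratio lower bound for f, and c a cost function on 𝒱. Let S* be a nonempty subset of 𝒱 with total cost b* = c(S*), and let s₁, …, s_m be a greedy sequence for (f, c) with G_i = {s₁,…,s_i}. Assume γ·c(s_j) ≤ b* for every j ∈ {1,…,m} and that the accumulated cost satisfies c(s₁) + ⋯ + c(s_m) ≥ b*. Then f(∅) − f(G_m) ≥ (1 − e^{−γ})·(f(∅) − f(S*)). -/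
/-!
Write `b = c(S*)` and `hᵢ = f(Gᵢ) − f(S*)`. The supermodularity ratio bounds the total gain of
adding `S*` to `Gᵢ` by `γ⁻¹` times the sum of the single-element gains, and the greedy choice
has the best gain per unit cost, so `γ · c(sᵢ₊₁) · hᵢ ≤ b · (f(Gᵢ) − f(Gᵢ₊₁))`, that is
`hᵢ₊₁ ≤ (1 − γ c(sᵢ₊₁)/b) hᵢ`. Iterating with `1 − x ≤ e^{−x}` and using that the accumulated
cost is at least `b` gives `h_m ≤ e^{−γ} h₀`.
-/

open Finset Real

section Greedy

variable {α : Type*} [DecidableEq α]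

def marginalGain (f : Finset α → ℝ) (A : Finset α) (v : α) : ℝ := f A - f (insert v A)

def IsSupermodularityRatio (γ : ℝ) (f : Finset α → ℝ) : Prop :=
  ∀ A B : Finset α, A ⊆ B → ∀ v ∉ B, γ * marginalGain f B v ≤ marginalGain f A v

def IsGreedyChoice (f : Finset α → ℝ) (c : α → ℝ) (G : Finset α) (x : α) : Prop :=
  ∀ a ∉ G, marginalGain f G a / c a ≤ marginalGain f G x / c x

theorem marginalGain_nonneg {f : Finset α → ℝ} (hf : Antitone f) (A : Finset α) (v : α) :
    0 ≤ marginalGain f A v :=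
  sub_nonneg.2 (hf (subset_insert v A))

theorem IsSupermodularityRatio.mul_sub_union_le_sum {γ : ℝ} {f : Finset α → ℝ}
    (hratio : IsSupermodularityRatio γ f) (G T : Finset α) :
    γ * (f G - f (G ∪ T)) ≤ ∑ v ∈ T \ G, marginalGain f G v := by
  induction T using Finset.induction_on with
  | empty => simp
  | @insert a T haT ih =>
    by_cases haG : a ∈ G
    · rwa [union_insert, insert_eq_of_mem (mem_union_left T haG), insert_sdiff_of_mem T haG]
    · have haGT : a ∉ G ∪ T := by simp [haG, haT]
      have hgain := hratio G (G ∪ T) subset_union_left a haGT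
      rw [union_insert, insert_sdiff_of_notMem T haG,
        sum_insert fun h ↦ haT (mem_sdiff.1 h).1]
      unfold marginalGain at *
      linarith

theorem IsGreedyChoice.sub_le_one_sub_mul_sub {γ : ℝ} {f : Finset α → ℝ} {c : α → ℝ}
    {G S : Finset α} {x : α} (hx : IsGreedyChoice f c G x) (hf : Antitone f) (hγ : 0 ≤ γ)
    (hratio : IsSupermodularityRatio γ f) (hc : ∀ v, 0 < c v) (hS : 0 < ∑ v ∈ S, c v) :
    f (insert x G) - f S ≤ (1 - γ * c x / ∑ v ∈ S, c v) * (f G - f S) := by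
  set b := ∑ v ∈ S, c v
  have hcx := hc x
  have hgain_nonneg := marginalGain_nonneg hf G x
  have hsum : ∑ v ∈ S \ G, marginalGain f G v ≤ b * (marginalGain f G x / c x) := by
    calc ∑ v ∈ S \ G, marginalGain f G v
        ≤ ∑ v ∈ S \ G, c v * (marginalGain f G x / c x) := by
          refine sum_le_sum fun v hv ↦ ?_
          have := hx v (mem_sdiff.1 hv).2
          rwa [div_le_iff₀ (hc v), mul_comm] at this
      _ ≤ ∑ v ∈ S, c v * (marginalGain f G x / c x) :=
          sum_le_sum_of_subset_of_nonneg sdiff_subset fun v _ _ ↦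
            mul_nonneg (hc v).le (div_nonneg hgain_nonneg hcx.le)
      _ = b * (marginalGain f G x / c x) := by rw [← sum_mul]
  have hgap : γ * (f G - f S) ≤ b * (marginalGain f G x / c x) := by
    have hunion : f (G ∪ S) ≤ f S := hf subset_union_right
    calc γ * (f G - f S) ≤ γ * (f G - f (G ∪ S)) := by gcongr
      _ ≤ b * (marginalGain f G x / c x) := (hratio.mul_sub_union_le_sum G S).trans hsum
  have hstep : γ * c x / b * (f G - f S) ≤ marginalGain f G x := by
    rw [← mul_div_assoc, le_div_iff₀ hcx] at hgap
    rw [div_mul_eq_mul_div, div_le_iff₀ hS]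
    linarith
  unfold marginalGain at hstep
  linarith

end Greedy

theorem le_exp_neg_sum_mul_of_le_one_sub_mul {h a : ℕ → ℝ} {m : ℕ} (h0 : 0 ≤ h 0)
    (ha : ∀ i < m, a i ≤ 1) (hrec : ∀ i < m, h (i + 1) ≤ (1 - a i) * h i) :
    h m ≤ exp (-∑ i ∈ range m, a i) * h 0 := by
  induction m with
  | zero => simp
  | succ n ih =>
    have ih := ih (fun i hi ↦ ha i (by omega)) (fun i hi ↦ hrec i (by omega))
    calc h (n + 1) ≤ (1 - a n) * h n := hrec n n.lt_succ_self
      _ ≤ (1 - a n) * (exp (-∑ i ∈ range n, a i) * h 0) :=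
          mul_le_mul_of_nonneg_left ih (sub_nonneg.2 (ha n n.lt_succ_self))
      _ ≤ exp (-a n) * (exp (-∑ i ∈ range n, a i) * h 0) := by
          gcongr
          linarith [add_one_le_exp (-a n)]
      _ = exp (-∑ i ∈ range (n + 1), a i) * h 0 := by
          rw [sum_range_succ, neg_add, exp_add]; ring

theorem stmt_4_general {α : Type*} [DecidableEq α]
    (f : Finset α → ℝ)
    (hmono : ∀ A B : Finset α, A ⊆ B → f B ≤ f A)
    (γ : ℝ) (hγ0 : 0 < γ)
    (hratio : ∀ A B : Finset α, A ⊆ B → ∀ v ∉ B,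
      f A - f (insert v A) ≥ γ * (f B - f (insert v B)))
    (c : α → ℝ) (hc : ∀ v, 0 < c v)
    (Sstar : Finset α) (hSstar : Sstar.Nonempty)
    (m : ℕ) (s : ℕ → α)
    (hgreedy : ∀ i < m, ∀ a ∉ (Finset.range i).image s,
      (f ((Finset.range i).image s) - f (insert a ((Finset.range i).image s))) / c a ≤
        (f ((Finset.range i).image s) -
            f (insert (s i) ((Finset.range i).image s))) / c (s i))
    (hcost : ∀ j < m, γ * c (s j) ≤ ∑ v ∈ Sstar, c v)
    -- accumulated cost of the greedy sequence reaches `b*`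
    (haccum : ∑ j ∈ Finset.range m, c (s j) ≥ ∑ v ∈ Sstar, c v) :
    f ∅ - f ((Finset.range m).image s) ≥
      (1 - Real.exp (-γ)) * (f ∅ - f Sstar) := by
  set b := ∑ v ∈ Sstar, c v
  have hb : 0 < b := sum_pos (fun v _ ↦ hc v) hSstar
  have hgap0 : 0 ≤ f ∅ - f Sstar := sub_nonneg.2 (hmono ∅ Sstar (empty_subset _))
  have hdecay := le_exp_neg_sum_mul_of_le_one_sub_mul
    (h := fun i ↦ f ((range i).image s) - f Sstar) (a := fun i ↦ γ * c (s i) / b) (m := m)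
    (by simpa using hgap0)
    (fun i hi ↦ (div_le_one hb).2 (hcost i hi)) fun i hi ↦ by
      simpa only [range_add_one, image_insert] using
        IsGreedyChoice.sub_le_one_sub_mul_sub (hgreedy i hi) hmono hγ0.le hratio hc hb
  have hsum : γ ≤ ∑ i ∈ range m, γ * c (s i) / b := by
    rw [← sum_div, ← mul_sum, le_div_iff₀ hb]
    exact mul_le_mul_of_nonneg_left haccum hγ0.le
  have hexp : exp (-∑ i ∈ range m, γ * c (s i) / b) ≤ exp (-γ) := exp_le_exp.2 (by linarith)
  simp only [image_empty, range_zero] at hdecay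
  linarith [mul_le_mul_of_nonneg_right hexp hgap0]

/-- if the greedy sequence's accumulated cost reaches `b* = c(Sstar)`, then
`f(∅) − f(G_m) ≥ (1 − e^{−γ})·(f(∅) − f(Sstar))`. Zero-indexed greedy sequence
`s 0, …, s (m-1)`, with `G m = (range m).image s`. -/
theorem stmt_4 {α : Type*} [Fintype α] [DecidableEq α]
    (f : Finset α → ℝ)
    (hmono : ∀ A B : Finset α, A ⊆ B → f B ≤ f A)
    (γ : ℝ) (hγ0 : 0 < γ) (hγ1 : γ ≤ 1)
    (hratio : ∀ A B : Finset α, A ⊆ B → ∀ v ∉ B,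
      f A - f (insert v A) ≥ γ * (f B - f (insert v B)))
    (c : α → ℝ) (hc : ∀ v, 0 < c v)
    (Sstar : Finset α) (hSstar : Sstar.Nonempty)
    (m : ℕ) (s : ℕ → α)
    (hdist : ∀ i < m, s i ∉ (Finset.range i).image s)
    (hgreedy : ∀ i < m, ∀ a ∉ (Finset.range i).image s,
      (f ((Finset.range i).image s) - f (insert a ((Finset.range i).image s))) / c a ≤
        (f ((Finset.range i).image s) -
            f (insert (s i) ((Finset.range i).image s))) / c (s i))
    (hcost : ∀ j < m, γ * c (s j) ≤ ∑ v ∈ Sstar, c v)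
    -- accumulated cost of the greedy sequence reaches `b*`
    (haccum : ∑ j ∈ Finset.range m, c (s j) ≥ ∑ v ∈ Sstar, c v) :
    f ∅ - f ((Finset.range m).image s) ≥
      (1 - Real.exp (-γ)) * (f ∅ - f Sstar) :=
  stmt_4_general f hmono γ hγ0 hratio c hc Sstar hSstar m s hgreedy hcost haccum
end

section
/- Let 𝒱 be a finite set, f a non-increasing set function on 𝒱, γ ∈ (0,1] a supermodularity-ratio lower bound for f, c a cost function on 𝒱, and b > 0 a budget with c(v) ≤ b for every v ∈ 𝒱. Let S* ⊆ 𝒱 satisfy c(S*) ≤ b, and assume γ·c(v) ≤ c(S*) for every v ∈ 𝒱. Let s₁, …, s_{l+1} be a greedy sequence for (f, c) with G_i = {s₁,…,s_i} such that c(G_l) ≤ b and c(G_{l+1}) > b. Let s ∈ 𝒱 minimize f({i}) over all i ∈ 𝒱 with c(i) ≤ b, and set S₁ = {s}. Then max{ f(∅) − f(S₁), f(∅) − f(G_l) } ≥ (γ/2)·(1 − e^{−γ})·(f(∅) − f(S*)). -/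
open Finset Real

/-!
Telescoping `S*` over a greedy set `G` with the supermodularity ratio, and comparing every
element of `S*` with the greedy choice by cost-normalised gain, shows that each greedy step closes
at least a `γ c(sᵢ) / c(S*)` fraction of the gap `f G - f S*`. Since `s₁, …, s_{l+1}` together
cost more than `c(S*)`, the gap of `G_{l+1}` has shrunk by a factor `∏ (1 - γ c(sᵢ) / c(S*)) ≤ e^{-γ}`.
Of the gain of `G_{l+1}`, the part from `G_l` is at most `f ∅ - f G_l`, while the last step gains
at most `1/γ` times the singleton gain of `s_{l+1}`, itself at most that of `s`. Since `γ ≤ 1`,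
the larger of the two candidates gets at least half of `γ (1 - e^{-γ}) (f ∅ - f S*)`.
-/

def IsSupermodularityRatioLowerBound {α : Type*} [DecidableEq α] (f : Finset α → ℝ) (γ : ℝ) :
    Prop :=
  ∀ A B : Finset α, A ⊆ B → ∀ v ∉ B, f A - f (insert v A) ≥ γ * (f B - f (insert v B))

lemma le_prod_mul_of_succ_le_mul {u r : ℕ → ℝ} {n : ℕ} (hr : ∀ i < n, 0 ≤ r i)
    (hu : ∀ i < n, u (i + 1) ≤ r i * u i) : u n ≤ (∏ i ∈ range n, r i) * u 0 := by
  induction n with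
  | zero => simp
  | succ n ih =>
    calc u (n + 1) ≤ r n * u n := hu n n.lt_succ_self
      _ ≤ r n * ((∏ i ∈ range n, r i) * u 0) :=
        mul_le_mul_of_nonneg_left (ih (fun i hi ↦ hr i (by omega)) fun i hi ↦ hu i (by omega))
          (hr n n.lt_succ_self)
      _ = (∏ i ∈ range (n + 1), r i) * u 0 := by rw [prod_range_succ]; ring

lemma prod_one_sub_le_exp_neg_sum {ι : Type*} (s : Finset ι) {x : ι → ℝ}
    (hx : ∀ i ∈ s, x i ≤ 1) : ∏ i ∈ s, (1 - x i) ≤ exp (-∑ i ∈ s, x i) := by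
  rw [← sum_neg_distrib, exp_sum]
  exact prod_le_prod (fun i hi ↦ sub_nonneg.2 (hx i hi)) fun i _ ↦ one_sub_le_exp_neg (x i)

section SetFunction

variable {α : Type*} [DecidableEq α] {f : Finset α → ℝ} {γ : ℝ}

lemma Antitone.sub_insert_nonneg (hf : Antitone f) (A : Finset α) (v : α) :
    0 ≤ f A - f (insert v A) :=
  sub_nonneg.2 (hf (subset_insert v A))

lemma Antitone.sub_insert_le_mul_of_forall_div_le (hf : Antitone f) {c : α → ℝ}
    (hc : ∀ v, 0 < c v) {G : Finset α} {x : α}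
    (hx : ∀ a ∉ G, (f G - f (insert a G)) / c a ≤ (f G - f (insert x G)) / c x) (a : α) :
    f G - f (insert a G) ≤ c a * ((f G - f (insert x G)) / c x) := by
  by_cases ha : a ∈ G
  · rw [insert_eq_self.2 ha, sub_self]
    exact mul_nonneg (hc a).le (div_nonneg (hf.sub_insert_nonneg G x) (hc x).le)
  · rw [← div_le_iff₀' (hc a)]
    exact hx a ha

namespace IsSupermodularityRatioLowerBound

lemma mul_sub_insert_le (hratio : IsSupermodularityRatioLowerBound f γ) (hf : Antitone f)
    {A B : Finset α} (hAB : A ⊆ B) (v : α) :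
    γ * (f B - f (insert v B)) ≤ f A - f (insert v A) := by
  by_cases hv : v ∈ B
  · rw [insert_eq_self.2 hv, sub_self, mul_zero]
    exact hf.sub_insert_nonneg A v
  · exact hratio A B hAB v hv

lemma mul_sub_union_le_sum (hratio : IsSupermodularityRatioLowerBound f γ) (hf : Antitone f)
    (S T : Finset α) :
    γ * (f S - f (S ∪ T)) ≤ ∑ v ∈ T, (f S - f (insert v S)) := by
  induction T using Finset.induction_on with
  | empty => simp
  | insert a T ha ih =>
    rw [sum_insert ha, union_insert]
    have := hratio.mul_sub_insert_le hf (subset_union_left : S ⊆ S ∪ T) a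
    linarith

lemma mul_sub_le_sum (hratio : IsSupermodularityRatioLowerBound f γ) (hf : Antitone f)
    (hγ : 0 ≤ γ) (S T : Finset α) :
    γ * (f S - f T) ≤ ∑ v ∈ T, (f S - f (insert v S)) :=
  (mul_le_mul_of_nonneg_left (sub_le_sub_left (hf subset_union_right) _) hγ).trans
    (hratio.mul_sub_union_le_sum hf S T)

lemma sub_insert_le_of_forall_div_le (hratio : IsSupermodularityRatioLowerBound f γ)
    (hf : Antitone f) (hγ : 0 ≤ γ) {c : α → ℝ} (hc : ∀ v, 0 < c v) {G T : Finset α}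
    (hT : 0 < ∑ w ∈ T, c w) {x : α}
    (hx : ∀ a ∉ G, (f G - f (insert a G)) / c a ≤ (f G - f (insert x G)) / c x) :
    f (insert x G) - f T ≤ (1 - γ * c x / ∑ w ∈ T, c w) * (f G - f T) := by
  set C := ∑ w ∈ T, c w
  have hgain : γ * (f G - f T) ≤ C * ((f G - f (insert x G)) / c x) :=
    calc γ * (f G - f T) ≤ ∑ v ∈ T, (f G - f (insert v G)) := hratio.mul_sub_le_sum hf hγ G T
      _ ≤ ∑ v ∈ T, c v * ((f G - f (insert x G)) / c x) :=
        sum_le_sum fun v _ ↦ hf.sub_insert_le_mul_of_forall_div_le hc hx v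
      _ = C * ((f G - f (insert x G)) / c x) := (sum_mul ..).symm
  have hcx := hc x
  field_simp at hgain ⊢
  nlinarith

lemma sub_le_exp_mul_of_greedy (hratio : IsSupermodularityRatioLowerBound f γ)
    (hf : Antitone f) (hγ : 0 ≤ γ) {c : α → ℝ} (hc : ∀ v, 0 < c v) {T : Finset α}
    (hT : 0 < ∑ w ∈ T, c w) (hcT : ∀ v, γ * c v ≤ ∑ w ∈ T, c w) {g : ℕ → α} {n : ℕ}
    (hgreedy : ∀ i < n, ∀ a ∉ (range i).image g,
      (f ((range i).image g) - f (insert a ((range i).image g))) / c a ≤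
        (f ((range i).image g) - f (insert (g i) ((range i).image g))) / c (g i)) :
    f ((range n).image g) - f T ≤
      exp (-∑ i ∈ range n, γ * c (g i) / ∑ w ∈ T, c w) * (f ∅ - f T) := by
  set C := ∑ w ∈ T, c w
  have hfrac : ∀ i, γ * c (g i) / C ≤ 1 := fun i ↦ (div_le_one hT).2 (hcT (g i))
  have hstep : ∀ i < n, f ((range (i + 1)).image g) - f T ≤
      (1 - γ * c (g i) / C) * (f ((range i).image g) - f T) := fun i hi ↦ by
    rw [range_add_one, image_insert]
    exact hratio.sub_insert_le_of_forall_div_le hf hγ hc hT (hgreedy i hi)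
  calc f ((range n).image g) - f T
      ≤ (∏ i ∈ range n, (1 - γ * c (g i) / C)) * (f ((range 0).image g) - f T) :=
        le_prod_mul_of_succ_le_mul (u := fun i ↦ f ((range i).image g) - f T)
          (fun i _ ↦ sub_nonneg.2 (hfrac i)) hstep
    _ ≤ exp (-∑ i ∈ range n, γ * c (g i) / C) * (f ∅ - f T) := by
        rw [range_zero, image_empty]
        exact mul_le_mul_of_nonneg_right (prod_one_sub_le_exp_neg_sum _ fun i _ ↦ hfrac i)
          (sub_nonneg.2 (hf (empty_subset T)))

end IsSupermodularityRatioLowerBound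

end SetFunction

theorem stmt_5_general {α : Type*} [DecidableEq α]
    (f : Finset α → ℝ)
    (hmono : ∀ A B : Finset α, A ⊆ B → f B ≤ f A)
    (γ : ℝ) (hγ0 : 0 < γ) (hγ1 : γ ≤ 1)
    (hratio : ∀ A B : Finset α, A ⊆ B → ∀ v ∉ B,
      f A - f (insert v A) ≥ γ * (f B - f (insert v B)))
    (c : α → ℝ) (hc : ∀ v, 0 < c v)
    -- a budget `b > 0` with `c(v) ≤ b` for every element `v`
    (b : ℝ) (hcb : ∀ v, c v ≤ b)
    -- `Sstar` is within budget, and `γ·c(v) ≤ c(Sstar)` for every `v`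
    (Sstar : Finset α) (hSb : ∑ v ∈ Sstar, c v ≤ b)
    (hvS : ∀ v, γ * c v ≤ ∑ w ∈ Sstar, c w)
    -- greedy sequence `g 0, …, g l` (length `l + 1`)
    (l : ℕ) (g : ℕ → α)
    (hgreedy : ∀ i < l + 1, ∀ a ∉ (Finset.range i).image g,
      (f ((Finset.range i).image g) - f (insert a ((Finset.range i).image g))) / c a ≤
        (f ((Finset.range i).image g) -
            f (insert (g i) ((Finset.range i).image g))) / c (g i))
    -- `c(G_l) ≤ b` and `c(G_{l+1}) > b`
    (hGl1 : ∑ v ∈ (Finset.range (l + 1)).image g, c v > b)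
    -- `s` minimizes `f({i})` over all `i ∈ 𝒱` with `c(i) ≤ b`
    (s : α) (hsmin : ∀ i : α, c i ≤ b → f {s} ≤ f {i}) :
    max (f ∅ - f {s}) (f ∅ - f ((Finset.range l).image g)) ≥
      γ / 2 * (1 - Real.exp (-γ)) * (f ∅ - f Sstar) := by
  have hf : Antitone f := hmono
  have hratio : IsSupermodularityRatioLowerBound f γ := hratio
  have hC : 0 < ∑ w ∈ Sstar, c w := (mul_pos hγ0 (hc s)).trans_le (hvS s)
  have hgap : f ((range (l + 1)).image g) - f Sstar ≤ exp (-γ) * (f ∅ - f Sstar) := by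
    refine (hratio.sub_le_exp_mul_of_greedy hf hγ0.le hc hC hvS hgreedy).trans
      (mul_le_mul_of_nonneg_right (exp_le_exp.2 ?_) (sub_nonneg.2 (hf (empty_subset Sstar))))
    have hcost : ∑ w ∈ Sstar, c w ≤ ∑ i ∈ range (l + 1), c (g i) :=
      (hSb.trans hGl1.le).trans (sum_image_le_of_nonneg fun v _ ↦ (hc v).le)
    rw [← sum_div, ← mul_sum, neg_le_neg_iff, le_div_iff₀ hC]
    exact mul_le_mul_of_nonneg_left hcost hγ0.le
  have hlast : γ * (f ((range l).image g) - f ((range (l + 1)).image g)) ≤ f ∅ - f {s} := by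
    rw [range_add_one, image_insert]
    have hsingleton := hratio.mul_sub_insert_le hf (empty_subset ((range l).image g)) (g l)
    rw [insert_empty] at hsingleton
    linarith [hsmin (g l) (hcb (g l))]
  have hGl_gain : 0 ≤ f ∅ - f ((range l).image g) := sub_nonneg.2 (hf (empty_subset _))
  have hsplit : γ * ((1 - exp (-γ)) * (f ∅ - f Sstar)) ≤ γ * (f ∅ - f ((range l).image g)) +
      γ * (f ((range l).image g) - f ((range (l + 1)).image g)) := by
    rw [← mul_add]
    exact mul_le_mul_of_nonneg_left (by linarith) hγ0.le
  linarith [mul_le_of_le_one_left hGl_gain hγ1,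
    le_max_left (f ∅ - f {s}) (f ∅ - f ((range l).image g)),
    le_max_right (f ∅ - f {s}) (f ∅ - f ((range l).image g))]

/-- suboptimality bound `(γ/2)·(1 − e^{−γ})` for the cost-constrained greedy
algorithm. Zero-indexed greedy sequence `g 0, …, g l` of length `l + 1`, with
`G i = (range i).image g`; `c(G_l) ≤ b` and `c(G_{l+1}) > b`. The element `s` minimizes
`f({i})` over all `i` with `c(i) ≤ b`, and `S₁ = {s}`. -/
theorem stmt_5 {α : Type*} [Fintype α] [DecidableEq α]
    (f : Finset α → ℝ)
    (hmono : ∀ A B : Finset α, A ⊆ B → f B ≤ f A)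
    (γ : ℝ) (hγ0 : 0 < γ) (hγ1 : γ ≤ 1)
    (hratio : ∀ A B : Finset α, A ⊆ B → ∀ v ∉ B,
      f A - f (insert v A) ≥ γ * (f B - f (insert v B)))
    (c : α → ℝ) (hc : ∀ v, 0 < c v)
    -- a budget `b > 0` with `c(v) ≤ b` for every element `v`
    (b : ℝ) (hb : 0 < b) (hcb : ∀ v, c v ≤ b)
    -- `Sstar` is within budget, and `γ·c(v) ≤ c(Sstar)` for every `v`
    (Sstar : Finset α) (hSb : ∑ v ∈ Sstar, c v ≤ b)
    (hvS : ∀ v, γ * c v ≤ ∑ w ∈ Sstar, c w)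
    -- greedy sequence `g 0, …, g l` (length `l + 1`)
    (l : ℕ) (g : ℕ → α)
    (hdist : ∀ i < l + 1, g i ∉ (Finset.range i).image g)
    (hgreedy : ∀ i < l + 1, ∀ a ∉ (Finset.range i).image g,
      (f ((Finset.range i).image g) - f (insert a ((Finset.range i).image g))) / c a ≤
        (f ((Finset.range i).image g) -
            f (insert (g i) ((Finset.range i).image g))) / c (g i))
    -- `c(G_l) ≤ b` and `c(G_{l+1}) > b`
    (hGl : ∑ v ∈ (Finset.range l).image g, c v ≤ b)
    (hGl1 : ∑ v ∈ (Finset.range (l + 1)).image g, c v > b)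
    -- `s` minimizes `f({i})` over all `i ∈ 𝒱` with `c(i) ≤ b`
    (s : α) (hs : c s ≤ b) (hsmin : ∀ i : α, c i ≤ b → f {s} ≤ f {i}) :
    max (f ∅ - f {s}) (f ∅ - f ((Finset.range l).image g)) ≥
      γ / 2 * (1 - Real.exp (-γ)) * (f ∅ - f Sstar) :=
  stmt_5_general f hmono γ hγ0 hγ1 hratio c hc b hcb Sstar hSb hvS l g hgreedy hGl1 s hsmin
end

section
/- Let 𝒱 be a finite set, f a non-increasing set function on 𝒱, γ ∈ (0,1] a supermodularity-ratio lower bound for f, c a cost function on 𝒱, and b > 0 a budget. Let S* ⊆ 𝒱 satisfy c(S*) ≤ b, and assume γ·c(v) ≤ c(S*) for every v ∈ 𝒱. Let s₁, …, s_l be a greedy sequence for (f, c) with G_l = {s₁,…,s_l}. Then f(∅) − f(G_l) ≥ (1 − e^{−γ·c(G_l)/b})·(f(∅) − f(S*)). -/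
/-!
Let `C = c(S*)`. If the greedy step adds `s` to `G`, every `v ∈ S* \ G` has cost-normalised gain
at most that of `s`, so the supermodularity ratio gives
`γ (f G - f S*) ≤ γ (f G - f (G ∪ S*)) ≤ ∑_{v ∈ S* \ G} (f G - f (G + v)) ≤ C (f G - f (G + s)) / c s`.
Hence the gap `f G_i - f S*` shrinks by the factor `1 - γ c(s_i) / C ≥ 0` at each step, and
`∏ (1 - t_i) ≤ exp (-∑ t_i)` together with `C ≤ b` yields the bound.
-/

open Finset Real

section SupermodularityRatio

variable {α : Type*} [DecidableEq α] {f : Finset α → ℝ} {γ : ℝ}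

theorem mul_sub_union_le_sum_sdiff
    (hratio : ∀ A B : Finset α, A ⊆ B → ∀ v ∉ B,
      f A - f (insert v A) ≥ γ * (f B - f (insert v B)))
    (G T : Finset α) :
    γ * (f G - f (G ∪ T)) ≤ ∑ v ∈ T \ G, (f G - f (insert v G)) := by
  induction T using Finset.induction_on with
  | empty => simp
  | @insert w T hwT ih =>
    by_cases hwG : w ∈ G
    · rwa [union_insert, insert_eq_of_mem (mem_union_left _ hwG), insert_sdiff_of_mem _ hwG]
    · have hw : w ∉ G ∪ T := by simp [hwG, hwT]
      have hw' : w ∉ T \ G := fun h => hwT (mem_sdiff.mp h).1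
      rw [union_insert, insert_sdiff_of_notMem _ hwG, sum_insert hw']
      linarith [hratio G (G ∪ T) subset_union_left w hw]

theorem greedy_gain_bound (hγ : 0 ≤ γ) (hmono : ∀ A B : Finset α, A ⊆ B → f B ≤ f A)
    (hratio : ∀ A B : Finset α, A ⊆ B → ∀ v ∉ B,
      f A - f (insert v A) ≥ γ * (f B - f (insert v B)))
    {c : α → ℝ} (hc : ∀ v, 0 < c v) (G S : Finset α) {s : α}
    (hgreedy : ∀ a ∉ G, (f G - f (insert a G)) / c a ≤ (f G - f (insert s G)) / c s) :
    γ * (f G - f S) ≤ (∑ v ∈ S, c v) * ((f G - f (insert s G)) / c s) := by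
  set r := (f G - f (insert s G)) / c s
  have hr : 0 ≤ r := div_nonneg (sub_nonneg.mpr (hmono _ _ (subset_insert _ _))) (hc s).le
  have hgain : ∀ v ∈ S \ G, f G - f (insert v G) ≤ c v * r := fun v hv => by
    have := hgreedy v (mem_sdiff.mp hv).2
    rwa [div_le_iff₀ (hc v), mul_comm] at this
  calc γ * (f G - f S) ≤ γ * (f G - f (G ∪ S)) := by
        gcongr
        exact hmono _ _ subset_union_right
    _ ≤ ∑ v ∈ S \ G, (f G - f (insert v G)) := mul_sub_union_le_sum_sdiff hratio G S
    _ ≤ ∑ v ∈ S \ G, c v * r := sum_le_sum hgain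
    _ = (∑ v ∈ S \ G, c v) * r := (sum_mul _ _ _).symm
    _ ≤ (∑ v ∈ S, c v) * r := mul_le_mul_of_nonneg_right
        (sum_le_sum_of_subset_of_nonneg sdiff_subset fun v _ _ => (hc v).le) hr

theorem greedy_gap_step (hγ : 0 ≤ γ) (hmono : ∀ A B : Finset α, A ⊆ B → f B ≤ f A)
    (hratio : ∀ A B : Finset α, A ⊆ B → ∀ v ∉ B,
      f A - f (insert v A) ≥ γ * (f B - f (insert v B)))
    {c : α → ℝ} (hc : ∀ v, 0 < c v) (G S : Finset α) (hS : 0 < ∑ v ∈ S, c v) {s : α}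
    (hgreedy : ∀ a ∉ G, (f G - f (insert a G)) / c a ≤ (f G - f (insert s G)) / c s) :
    f (insert s G) - f S ≤ (1 - γ * c s / ∑ v ∈ S, c v) * (f G - f S) := by
  have hgain := greedy_gain_bound hγ hmono hratio hc G S hgreedy
  have key : γ * c s / (∑ v ∈ S, c v) * (f G - f S) ≤ f G - f (insert s G) :=
    calc γ * c s / (∑ v ∈ S, c v) * (f G - f S)
        = c s / (∑ v ∈ S, c v) * (γ * (f G - f S)) := by ring
      _ ≤ c s / (∑ v ∈ S, c v) * ((∑ v ∈ S, c v) * ((f G - f (insert s G)) / c s)) := by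
          gcongr
          exact (div_pos (hc s) hS).le
      _ = f G - f (insert s G) := by field_simp [(hc s).ne']
  linarith

end SupermodularityRatio

theorem le_mul_exp_neg_sum_of_le_one_sub_mul {x t : ℕ → ℝ} {n : ℕ} (hx : 0 ≤ x 0)
    (ht : ∀ i < n, t i ≤ 1) (hstep : ∀ i < n, x (i + 1) ≤ (1 - t i) * x i) :
    x n ≤ x 0 * exp (-∑ i ∈ range n, t i) := by
  induction n with
  | zero => simp
  | succ n ih =>
    have ih := ih (fun i hi => ht i (by omega)) (fun i hi => hstep i (by omega))
    calc x (n + 1) ≤ (1 - t n) * x n := hstep n (by omega)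
      _ ≤ (1 - t n) * (x 0 * exp (-∑ i ∈ range n, t i)) := by
          gcongr
          linarith [ht n (by omega)]
      _ ≤ exp (-t n) * (x 0 * exp (-∑ i ∈ range n, t i)) := by
          gcongr
          exact one_sub_le_exp_neg _
      _ = x 0 * exp (-∑ i ∈ range (n + 1), t i) := by
          rw [sum_range_succ, neg_add, exp_add]
          ring

theorem stmt_6_general {α : Type*} [DecidableEq α]
    (f : Finset α → ℝ)
    (hmono : ∀ A B : Finset α, A ⊆ B → f B ≤ f A)
    (γ : ℝ) (hγ0 : 0 < γ)
    (hratio : ∀ A B : Finset α, A ⊆ B → ∀ v ∉ B,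
      f A - f (insert v A) ≥ γ * (f B - f (insert v B)))
    (c : α → ℝ) (hc : ∀ v, 0 < c v)
    (b : ℝ)
    -- `Sstar` is within budget, and `γ·c(v) ≤ c(Sstar)` for every `v`
    (Sstar : Finset α) (hSb : ∑ v ∈ Sstar, c v ≤ b)
    (hvS : ∀ v, γ * c v ≤ ∑ w ∈ Sstar, c w)
    -- greedy sequence `g 0, …, g (l-1)` of length `l`
    (l : ℕ) (g : ℕ → α)
    (hgreedy : ∀ i < l, ∀ a ∉ (Finset.range i).image g,
      (f ((Finset.range i).image g) - f (insert a ((Finset.range i).image g))) / c a ≤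
        (f ((Finset.range i).image g) -
            f (insert (g i) ((Finset.range i).image g))) / c (g i)) :
    f ∅ - f ((Finset.range l).image g) ≥
      (1 - Real.exp (-(γ * (∑ v ∈ (Finset.range l).image g, c v) / b))) *
        (f ∅ - f Sstar) := by
  set C := ∑ w ∈ Sstar, c w
  have hC : 0 < C := (mul_pos hγ0 (hc (g 0))).trans_le (hvS (g 0))
  have hgap := le_mul_exp_neg_sum_of_le_one_sub_mul (n := l)
    (x := fun i => f ((range i).image g) - f Sstar) (t := fun i => γ * c (g i) / C)
    (by simpa using hmono ∅ Sstar (empty_subset _))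
    (fun i _ => (div_le_one hC).mpr (hvS (g i)))
    (fun i hi => by
      simpa only [range_add_one, image_insert] using
        greedy_gap_step hγ0.le hmono hratio hc _ Sstar hC (hgreedy i hi))
  have hexp : γ * (∑ v ∈ (range l).image g, c v) / b ≤ ∑ i ∈ range l, γ * c (g i) / C := by
    rw [← sum_div, ← mul_sum]
    refine div_le_div₀ (mul_nonneg hγ0.le (sum_nonneg fun i _ => (hc _).le)) ?_ hC hSb
    gcongr
    exact sum_image_le_of_nonneg fun v _ => (hc v).le
  have hf0 : 0 ≤ f ∅ - f Sstar := sub_nonneg.mpr (hmono _ _ (empty_subset _))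
  simp only [range_zero, image_empty] at hgap
  nlinarith [mul_le_mul_of_nonneg_left (exp_le_exp.mpr (neg_le_neg hexp)) hf0]

/-- bound `1 − e^{−γ·c(G_l)/b}` for the cost-constrained greedy algorithm.
Zero-indexed greedy sequence `g 0, …, g (l-1)`, with `G_l = (range l).image g`. -/
theorem stmt_6 {α : Type*} [Fintype α] [DecidableEq α]
    (f : Finset α → ℝ)
    (hmono : ∀ A B : Finset α, A ⊆ B → f B ≤ f A)
    (γ : ℝ) (hγ0 : 0 < γ) (hγ1 : γ ≤ 1)
    (hratio : ∀ A B : Finset α, A ⊆ B → ∀ v ∉ B,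
      f A - f (insert v A) ≥ γ * (f B - f (insert v B)))
    (c : α → ℝ) (hc : ∀ v, 0 < c v)
    -- a budget `b > 0`
    (b : ℝ) (hb : 0 < b)
    -- `Sstar` is within budget, and `γ·c(v) ≤ c(Sstar)` for every `v`
    (Sstar : Finset α) (hSb : ∑ v ∈ Sstar, c v ≤ b)
    (hvS : ∀ v, γ * c v ≤ ∑ w ∈ Sstar, c w)
    -- greedy sequence `g 0, …, g (l-1)` of length `l`
    (l : ℕ) (g : ℕ → α)
    (hdist : ∀ i < l, g i ∉ (Finset.range i).image g)
    (hgreedy : ∀ i < l, ∀ a ∉ (Finset.range i).image g,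
      (f ((Finset.range i).image g) - f (insert a ((Finset.range i).image g))) / c a ≤
        (f ((Finset.range i).image g) -
            f (insert (g i) ((Finset.range i).image g))) / c (g i)) :
    f ∅ - f ((Finset.range l).image g) ≥
      (1 - Real.exp (-(γ * (∑ v ∈ (Finset.range l).image g, c v) / b))) *
        (f ∅ - f Sstar) :=
  stmt_6_general f hmono γ hγ0 hratio c hc b Sstar hSb hvS l g hgreedy
end

section
/- Under the sensor-indexed Kalman recursion, let Θ₁, …, Θ_T be n×n positive semidefinite real matrices. Then the set function S ↦ Σ_{t=1}^{T} tr(Θ_t Σ_t(S)) is non-increasing: for all S₁ ⊆ S₂ ⊆ 𝒱, Σ_{t=1}^{T} tr(Θ_t Σ_t(S₁)) ≥ Σ_{t=1}^{T} tr(Θ_t Σ_t(S₂)). -/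
/-!
In the Loewner order, the prediction `P ↦ A P Aᵀ + W` is monotone and the measurement update
`P ↦ (P⁻¹ + J)⁻¹` is monotone in `P` and antitone in the information `J = ∑_{i ∈ S} C̄ᵢᵀ C̄ᵢ`,
which grows with `S`. Hence `Σ_t(S₂) ⪯ Σ_t(S₁)` for every `t` by induction, and `tr (Θ ·)` is
monotone for `Θ ⪰ 0`.
-/

open Matrix Finset

open scoped MatrixOrder ComplexOrder

namespace Matrix

variable {n : Type*} [Fintype n]

section RCLike

variable [DecidableEq n] {𝕜 : Type*} [RCLike 𝕜]

/-- `fromBlocks B 1 1 A⁻¹` is positive semidefinite because its Schur complement `B - A` is;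
its other Schur complement is `A⁻¹ - B⁻¹`. -/
theorem PosDef.inv_le_inv {A B : Matrix n n 𝕜} (hA : A.PosDef) (hAB : A ≤ B) : B⁻¹ ≤ A⁻¹ := by
  have hB : B.PosDef := by simpa using hA.add_posSemidef hAB
  let := hA.isUnit.invertible
  let := hA.inv.isUnit.invertible
  let := hB.isUnit.invertible
  rw [le_iff] at hAB ⊢
  have hblock : (fromBlocks B 1 1 A⁻¹).PosSemidef := by
    simpa using (PosDef.fromBlocks₂₂ B (1 : Matrix n n 𝕜) hA.inv).mpr (by simpa using hAB)
  simpa using (PosDef.fromBlocks₁₁ (1 : Matrix n n 𝕜) A⁻¹ hB).mp (by simpa using hblock)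

theorem trace_mul_nonneg {A B : Matrix n n 𝕜} (hA : 0 ≤ A) (hB : 0 ≤ B) :
    0 ≤ (A * B).trace := by
  obtain ⟨C, rfl⟩ := CStarAlgebra.nonneg_iff_eq_star_mul_self.mp hA
  rw [Matrix.mul_assoc, trace_mul_comm]
  exact (star_right_conjugate_nonneg hB C).posSemidef.trace_nonneg

theorem trace_mul_le_trace_mul {Θ A B : Matrix n n 𝕜} (hΘ : 0 ≤ Θ) (hAB : A ≤ B) :
    (Θ * A).trace ≤ (Θ * B).trace := by
  simpa [Matrix.mul_sub] using trace_mul_nonneg hΘ (sub_nonneg.mpr hAB)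

variable {P Q J K : Matrix n n 𝕜}

theorem PosDef.inv_add_inv (hP : P.PosDef) (hJ : 0 ≤ J) : (P⁻¹ + J)⁻¹.PosDef :=
  (hP.inv.add_posSemidef hJ.posSemidef).inv

theorem inv_add_le_inv_add (hP : P.PosDef) (hPQ : P ≤ Q) (hJ : 0 ≤ J) (hJK : J ≤ K) :
    (P⁻¹ + K)⁻¹ ≤ (Q⁻¹ + J)⁻¹ := by
  have hQ : Q.PosDef := by simpa using hP.add_posSemidef hPQ
  exact (hQ.inv.add_posSemidef hJ.posSemidef).inv_le_inv
    (add_le_add (hP.inv_le_inv hPQ) hJK)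

end RCLike

section Real

variable {P Q W : Matrix n n ℝ}

theorem PosDef.mul_mul_transpose_add (A : Matrix n n ℝ) (hP : 0 ≤ P) (hW : W.PosDef) :
    (A * P * Aᵀ + W).PosDef := by
  have hAPA := (star_right_conjugate_nonneg hP A).posSemidef
  rw [star_eq_conjTranspose, conjTranspose_eq_transpose_of_trivial] at hAPA
  exact hW.posSemidef_add hAPA

theorem mul_mul_transpose_add_le_mul_mul_transpose_add (A W : Matrix n n ℝ) (hPQ : P ≤ Q) :
    A * P * Aᵀ + W ≤ A * Q * Aᵀ + W := by
  have hAPA := star_right_conjugate_le_conjugate hPQ A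
  rw [star_eq_conjTranspose, conjTranspose_eq_transpose_of_trivial] at hAPA
  exact add_le_add_left hAPA W

theorem transpose_mul_self_nonneg {m : Type*} [Fintype m] (C : Matrix m n ℝ) : 0 ≤ Cᵀ * C := by
  simpa [conjTranspose_eq_transpose_of_trivial] using (posSemidef_conjTranspose_mul_self C).nonneg

variable {ι : Type*} {m : ι → Type*} [∀ i, Fintype (m i)] (C : (i : ι) → Matrix (m i) n ℝ)

theorem sum_transpose_mul_self_nonneg (S : Finset ι) : 0 ≤ ∑ i ∈ S, (C i)ᵀ * C i :=
  sum_nonneg fun i _ ↦ transpose_mul_self_nonneg (C i)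

theorem sum_transpose_mul_self_mono {S₁ S₂ : Finset ι} (hS : S₁ ⊆ S₂) :
    ∑ i ∈ S₁, (C i)ᵀ * C i ≤ ∑ i ∈ S₂, (C i)ᵀ * C i :=
  sum_le_sum_of_subset_of_nonneg hS fun i _ _ ↦ transpose_mul_self_nonneg (C i)

end Real

end Matrix

theorem stmt_12_general {n : ℕ} {α : Type*}
    (T : ℕ)
    (Sig0 : Matrix (Fin n) (Fin n) ℝ) (hSig0 : Sig0.PosDef)
    (A W : ℕ → Matrix (Fin n) (Fin n) ℝ)
    (hW : ∀ t, 1 ≤ t → t + 1 ≤ T → (W t).PosDef)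
    (p : α → ℕ → ℕ)
    (C : (i : α) → (t : ℕ) → Matrix (Fin (p i t)) (Fin n) ℝ)
    (Sig : Finset α → ℕ → Matrix (Fin n) (Fin n) ℝ)
    (hinit : ∀ S : Finset α,
      Sig S 1 = (Sig0⁻¹ + ∑ i ∈ S, (C i 1)ᵀ * C i 1)⁻¹)
    (hrec : ∀ S : Finset α, ∀ t, 1 ≤ t → t + 1 ≤ T →
      Sig S (t + 1) =
        ((A t * Sig S t * (A t)ᵀ + W t)⁻¹ + ∑ i ∈ S, (C i (t + 1))ᵀ * C i (t + 1))⁻¹)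
    (Θ : ℕ → Matrix (Fin n) (Fin n) ℝ)
    (hΘ : ∀ t, 1 ≤ t → t ≤ T → (Θ t).PosSemidef) :
    ∀ S₁ S₂ : Finset α, S₁ ⊆ S₂ →
      ∑ t ∈ Finset.Icc 1 T, (Θ t * Sig S₂ t).trace ≤
        ∑ t ∈ Finset.Icc 1 T, (Θ t * Sig S₁ t).trace := by
  intro S₁ S₂ hS
  have hJ t := sum_transpose_mul_self_nonneg (C · t) S₁
  have hK t := sum_transpose_mul_self_nonneg (C · t) S₂
  have hJK t := sum_transpose_mul_self_mono (C · t) hS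
  have hSig : ∀ t, 1 ≤ t → t ≤ T → (Sig S₂ t).PosDef ∧ Sig S₂ t ≤ Sig S₁ t := by
    intro t ht
    induction t, ht using Nat.le_induction with
    | base =>
      intro _
      rw [hinit, hinit]
      exact ⟨hSig0.inv_add_inv (hK 1), inv_add_le_inv_add hSig0 le_rfl (hJ 1) (hJK 1)⟩
    | succ t ht ih =>
      intro htT
      obtain ⟨hpos, hle⟩ := ih (by omega)
      have hprior := PosDef.mul_mul_transpose_add (A t) hpos.posSemidef.nonneg (hW t ht htT)
      rw [hrec S₁ t ht htT, hrec S₂ t ht htT]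
      exact ⟨hprior.inv_add_inv (hK _), inv_add_le_inv_add hprior
        (mul_mul_transpose_add_le_mul_mul_transpose_add _ _ hle) (hJ _) (hJK _)⟩
  refine sum_le_sum fun t ht ↦ ?_
  obtain ⟨ht1, htT⟩ := mem_Icc.mp ht
  exact trace_mul_le_trace_mul (hΘ t ht1 htT).nonneg (hSig t ht1 htT).2

/-- under the sensor-indexed Kalman recursion, for positive semidefinite
weights `Θ₁, …, Θ_T`, the set function `S ↦ Σ_{t=1}^{T} tr(Θ_t Σ_t(S))` is non-increasing:
`S₁ ⊆ S₂` implies `Σ_t tr(Θ_t Σ_t(S₁)) ≥ Σ_t tr(Θ_t Σ_t(S₂))`. -/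
theorem stmt_12 {n : ℕ} (hn : 1 ≤ n) {α : Type*} [Fintype α] [DecidableEq α]
    (T : ℕ) (hT : 1 ≤ T)
    (Sig0 : Matrix (Fin n) (Fin n) ℝ) (hSig0 : Sig0.PosDef)
    (A W : ℕ → Matrix (Fin n) (Fin n) ℝ)
    (hW : ∀ t, 1 ≤ t → t + 1 ≤ T → (W t).PosDef)
    (p : α → ℕ → ℕ)
    (C : (i : α) → (t : ℕ) → Matrix (Fin (p i t)) (Fin n) ℝ)
    (Sig : Finset α → ℕ → Matrix (Fin n) (Fin n) ℝ)
    (hinit : ∀ S : Finset α,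
      Sig S 1 = (Sig0⁻¹ + ∑ i ∈ S, (C i 1)ᵀ * C i 1)⁻¹)
    (hrec : ∀ S : Finset α, ∀ t, 1 ≤ t → t + 1 ≤ T →
      Sig S (t + 1) =
        ((A t * Sig S t * (A t)ᵀ + W t)⁻¹ + ∑ i ∈ S, (C i (t + 1))ᵀ * C i (t + 1))⁻¹)
    (Θ : ℕ → Matrix (Fin n) (Fin n) ℝ)
    (hΘ : ∀ t, 1 ≤ t → t ≤ T → (Θ t).PosSemidef) :
    ∀ S₁ S₂ : Finset α, S₁ ⊆ S₂ →
      ∑ t ∈ Finset.Icc 1 T, (Θ t * Sig S₂ t).trace ≤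
        ∑ t ∈ Finset.Icc 1 T, (Θ t * Sig S₁ t).trace :=
  stmt_12_general T Sig0 hSig0 A W hW p C Sig hinit hrec Θ hΘ
end

section
/- Fix an integer T ≥ 1 and, for t = 1, …, T, let A_t be an n×n real matrix, B_t an n×m_t real matrix, Q_t an n×n symmetric positive definite real matrix, and R_t an m_t×m_t symmetric positive definite real matrix. Define the backward Riccati recursion: N_{T+1} = 0 and, for t = T, T−1, …, 1, S_t = Q_t + N_{t+1} and N_t = A_tᵀ(S_t⁻¹ + B_t R_t⁻¹ B_tᵀ)⁻¹ A_t; also define M_t = B_tᵀ S_t B_t + R_t, K_t = −M_t⁻¹ B_tᵀ S_t A_t, and Θ_t = K_tᵀ M_t K_t. Writing U_t = A_{t−1} A_{t−2} ⋯ A₁ (with U₁ the identity matrix) and V_t = A_t A_{t−1} ⋯ A₁, it holds that Σ_{t=1}^{T} U_tᵀ Θ_t U_t = Σ_{t=1}^{T} V_tᵀ Q_t V_t − N₁. -/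
/-!
By the Woodbury identity, `(S⁻¹ + B R⁻¹ Bᵀ)⁻¹ = S - S B M⁻¹ Bᵀ S` with `M = Bᵀ S B + R`,
and `Aᵀ S B M⁻¹ Bᵀ S A` is exactly `Kᵀ M K`. Hence the Riccati recursion reads
`Θ_t = A_tᵀ (Q_t + N_{t+1}) A_t - N_t`. Conjugating by `U_t` and using `U_{t+1} = A_t U_t`,
the terms `U_tᵀ N_t U_t` telescope, leaving `-U_1ᵀ N_1 U_1 = -N_1` because `N_{T+1} = 0`.
Positive definiteness only serves to make the inverses genuine: `N_{t+1}` is positive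
semidefinite by backward induction, so `S_t` and `M_t` are positive definite.
-/

open Matrix Finset

namespace Matrix

variable {ι κ ν : Type*}

lemma PosDef.transpose_eq {S : Matrix ι ι ℝ} (hS : S.PosDef) : Sᵀ = S :=
  (isHermitian_iff_isSymm.mp hS.isHermitian).eq

variable [Fintype ι] [Fintype κ]

lemma PosSemidef.transpose_mul_mul_same {S : Matrix ι ι ℝ} (hS : S.PosSemidef)
    (B : Matrix ι κ ℝ) : (Bᵀ * S * B).PosSemidef := by
  simpa only [conjTranspose_eq_transpose_of_trivial] using hS.conjTranspose_mul_mul_same B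

lemma PosSemidef.mul_mul_transpose_same {S : Matrix ι ι ℝ} (hS : S.PosSemidef)
    (B : Matrix κ ι ℝ) : (B * S * Bᵀ).PosSemidef := by
  simpa only [conjTranspose_eq_transpose_of_trivial] using hS.mul_mul_conjTranspose_same B

lemma PosDef.transpose_mul_mul_add {S : Matrix ι ι ℝ} {R : Matrix κ κ ℝ} (hS : S.PosDef)
    (hR : R.PosDef) (B : Matrix ι κ ℝ) : (Bᵀ * S * B + R).PosDef :=
  PosDef.posSemidef_add (hS.posSemidef.transpose_mul_mul_same B) hR

variable [DecidableEq ι] [DecidableEq κ]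

lemma PosDef.inv_add_mul_inv_mul_transpose {S : Matrix ι ι ℝ} {R : Matrix κ κ ℝ}
    (hS : S.PosDef) (hR : R.PosDef) (B : Matrix ι κ ℝ) : (S⁻¹ + B * R⁻¹ * Bᵀ).PosDef :=
  hS.inv.add_posSemidef (hR.inv.posSemidef.mul_mul_transpose_same B)

lemma inv_add_mul_inv_mul_transpose_inv {S : Matrix ι ι ℝ} {R : Matrix κ κ ℝ}
    (hS : S.PosDef) (hR : R.PosDef) (B : Matrix ι κ ℝ) :
    (S⁻¹ + B * R⁻¹ * Bᵀ)⁻¹ = S - S * B * (Bᵀ * S * B + R)⁻¹ * Bᵀ * S := by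
  have hSS : S⁻¹⁻¹ = S := nonsing_inv_nonsing_inv S ((isUnit_iff_isUnit_det S).mp hS.isUnit)
  have hRR : R⁻¹⁻¹ = R := nonsing_inv_nonsing_inv R ((isUnit_iff_isUnit_det R).mp hR.isUnit)
  have hMunit := (hS.transpose_mul_mul_add hR B).isUnit
  rw [add_comm] at hMunit
  simpa only [hSS, hRR, add_comm R] using
    add_mul_mul_inv_eq_sub S⁻¹ B R⁻¹ Bᵀ hS.inv.isUnit hR.inv.isUnit (by rwa [hSS, hRR])

lemma riccati_update_posSemidef [Fintype ν] {S : Matrix ι ι ℝ} {R : Matrix κ κ ℝ}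
    (hS : S.PosDef) (hR : R.PosDef) (A : Matrix ι ν ℝ) (B : Matrix ι κ ℝ) :
    (Aᵀ * (S⁻¹ + B * R⁻¹ * Bᵀ)⁻¹ * A).PosSemidef :=
  (hS.inv_add_mul_inv_mul_transpose hR B).inv.posSemidef.transpose_mul_mul_same A

lemma riccati_update_eq_sub_gain_cost {S : Matrix ι ι ℝ} {R : Matrix κ κ ℝ} (hS : S.PosDef)
    (hR : R.PosDef) (A : Matrix ι ν ℝ) (B : Matrix ι κ ℝ) (M : Matrix κ κ ℝ)
    (hM : M = Bᵀ * S * B + R) (K : Matrix κ ν ℝ) (hK : K = -(M⁻¹ * Bᵀ * S * A)) :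
    Aᵀ * (S⁻¹ + B * R⁻¹ * Bᵀ)⁻¹ * A = Aᵀ * S * A - Kᵀ * M * K := by
  have hMpd : M.PosDef := hM ▸ hS.transpose_mul_mul_add hR B
  have hMK : M * K = -(Bᵀ * S * A) := by
    rw [hK, Matrix.mul_neg, Matrix.mul_assoc, Matrix.mul_assoc, Matrix.mul_assoc,
      mul_nonsing_inv_cancel_left _ _ ((isUnit_iff_isUnit_det M).mp hMpd.isUnit)]
  have hKT : Kᵀ = -(Aᵀ * S * B * M⁻¹) := by
    rw [hK, transpose_neg, transpose_mul, transpose_mul, transpose_mul,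
      transpose_nonsing_inv, hMpd.transpose_eq, hS.transpose_eq, transpose_transpose]
    simp only [Matrix.mul_assoc]
  rw [inv_add_mul_inv_mul_transpose_inv hS hR B, ← hM, Matrix.mul_assoc Kᵀ, hMK, hKT]
  simp only [Matrix.mul_sub, Matrix.sub_mul, Matrix.neg_mul, Matrix.mul_neg, neg_neg,
    Matrix.mul_assoc]

end Matrix

lemma sum_transpose_mul_mul_eq_sub_of_telescope {R ι : Type*} [CommRing R] [Fintype ι]
    [DecidableEq ι] (T : ℕ) (A Q N Θ U : ℕ → Matrix ι ι R) (hNT : N (T + 1) = 0)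
    (hU1 : U 1 = 1) (hUrec : ∀ t, 1 ≤ t → U (t + 1) = A t * U t)
    (hΘ : ∀ t ∈ Icc 1 T, Θ t = (A t)ᵀ * (Q t + N (t + 1)) * A t - N t) :
    ∑ t ∈ Icc 1 T, (U t)ᵀ * Θ t * U t =
      (∑ t ∈ Icc 1 T, (A t * U t)ᵀ * Q t * (A t * U t)) - N 1 := by
  set V : ℕ → Matrix ι ι R := fun t ↦ (U t)ᵀ * N t * U t
  have hstep : ∀ t ∈ Icc 1 T,
      (U t)ᵀ * Θ t * U t = (A t * U t)ᵀ * Q t * (A t * U t) + (V (t + 1) - V t) := by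
    intro t ht
    simp only [V, hΘ t ht, hUrec t (mem_Icc.mp ht).1, transpose_mul, Matrix.mul_sub,
      Matrix.sub_mul, Matrix.mul_add, Matrix.add_mul, Matrix.mul_assoc]
    abel
  have htel : ∑ t ∈ Icc 1 T, (V (t + 1) - V t) = V (T + 1) - V 1 := by
    rw [← Ico_add_one_right_eq_Icc, sum_Ico_sub V (by omega)]
  rw [sum_congr rfl hstep, sum_add_distrib, htel]
  simp [V, hNT, hU1, sub_eq_add_neg]

theorem stmt_14_general {n : ℕ} (T : ℕ)
    (m : ℕ → ℕ)
    (A : ℕ → Matrix (Fin n) (Fin n) ℝ)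
    (B : (t : ℕ) → Matrix (Fin n) (Fin (m t)) ℝ)
    (Q : ℕ → Matrix (Fin n) (Fin n) ℝ)
    (hQ : ∀ t, 1 ≤ t → t ≤ T → (Q t).PosDef)
    (R : (t : ℕ) → Matrix (Fin (m t)) (Fin (m t)) ℝ)
    (hR : ∀ t, 1 ≤ t → t ≤ T → (R t).PosDef)
    -- backward Riccati recursion
    (N Sm : ℕ → Matrix (Fin n) (Fin n) ℝ)
    (hNT : N (T + 1) = 0)
    (hSm : ∀ t, 1 ≤ t → t ≤ T → Sm t = Q t + N (t + 1))
    (hN : ∀ t, 1 ≤ t → t ≤ T →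
      N t = (A t)ᵀ * ((Sm t)⁻¹ + B t * (R t)⁻¹ * (B t)ᵀ)⁻¹ * A t)
    -- control gain quantities
    (M : (t : ℕ) → Matrix (Fin (m t)) (Fin (m t)) ℝ)
    (hM : ∀ t, 1 ≤ t → t ≤ T → M t = (B t)ᵀ * Sm t * B t + R t)
    (K : (t : ℕ) → Matrix (Fin (m t)) (Fin n) ℝ)
    (hK : ∀ t, 1 ≤ t → t ≤ T → K t = -((M t)⁻¹ * (B t)ᵀ * Sm t * A t))
    (Θ : ℕ → Matrix (Fin n) (Fin n) ℝ)
    (hΘ : ∀ t, 1 ≤ t → t ≤ T → Θ t = (K t)ᵀ * M t * K t)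
    -- state-transition products `U_t = A_{t−1}⋯A₁`, `U₁ = 1`
    (U : ℕ → Matrix (Fin n) (Fin n) ℝ)
    (hU1 : U 1 = 1)
    (hUrec : ∀ t, 1 ≤ t → U (t + 1) = A t * U t) :
    ∑ t ∈ Finset.Icc 1 T, (U t)ᵀ * Θ t * U t =
      (∑ t ∈ Finset.Icc 1 T, (A t * U t)ᵀ * Q t * (A t * U t)) - N 1 := by
  have hNpsd : ∀ t, 1 ≤ t → t ≤ T → (N (t + 1)).PosSemidef := by
    intro t h1 htT
    induction htT using Nat.decreasingInduction with
    | self => rw [hNT]; exact .zero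
    | of_succ k hk ih =>
      rw [hN (k + 1) (by omega) hk, hSm (k + 1) (by omega) hk]
      exact riccati_update_posSemidef ((hQ _ (by omega) hk).add_posSemidef (ih (by omega)))
        (hR _ (by omega) hk) _ _
  refine sum_transpose_mul_mul_eq_sub_of_telescope T A Q N Θ U hNT hU1 hUrec fun t ht ↦ ?_
  obtain ⟨h1, htT⟩ := mem_Icc.mp ht
  have hS : (Sm t).PosDef := by
    rw [hSm t h1 htT]; exact (hQ t h1 htT).add_posSemidef (hNpsd t h1 htT)
  rw [hN t h1 htT, riccati_update_eq_sub_gain_cost hS (hR t h1 htT) _ _ _ (hM t h1 htT) _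
    (hK t h1 htT), ← hΘ t h1 htT, ← hSm t h1 htT, sub_sub_cancel]

/-- for the backward Riccati recursion `N_{T+1} = 0`,
`S_t = Q_t + N_{t+1}`, `N_t = A_tᵀ(S_t⁻¹ + B_t R_t⁻¹ B_tᵀ)⁻¹ A_t`, with
`M_t = B_tᵀ S_t B_t + R_t`, `K_t = −M_t⁻¹ B_tᵀ S_t A_t`, `Θ_t = K_tᵀ M_t K_t`,
and the state-transition products `U₁ = 1`, `U_{t+1} = A_t U_t` (so `U_t = A_{t−1}⋯A₁`)
and `V_t = A_t U_t = A_t⋯A₁`, it holds that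
`Σ_{t=1}^{T} U_tᵀ Θ_t U_t = Σ_{t=1}^{T} V_tᵀ Q_t V_t − N₁`. -/
theorem stmt_14 {n : ℕ} (T : ℕ) (hT : 1 ≤ T)
    (m : ℕ → ℕ)
    (A : ℕ → Matrix (Fin n) (Fin n) ℝ)
    (B : (t : ℕ) → Matrix (Fin n) (Fin (m t)) ℝ)
    (Q : ℕ → Matrix (Fin n) (Fin n) ℝ)
    (hQ : ∀ t, 1 ≤ t → t ≤ T → (Q t).PosDef)
    (R : (t : ℕ) → Matrix (Fin (m t)) (Fin (m t)) ℝ)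
    (hR : ∀ t, 1 ≤ t → t ≤ T → (R t).PosDef)
    -- backward Riccati recursion
    (N Sm : ℕ → Matrix (Fin n) (Fin n) ℝ)
    (hNT : N (T + 1) = 0)
    (hSm : ∀ t, 1 ≤ t → t ≤ T → Sm t = Q t + N (t + 1))
    (hN : ∀ t, 1 ≤ t → t ≤ T →
      N t = (A t)ᵀ * ((Sm t)⁻¹ + B t * (R t)⁻¹ * (B t)ᵀ)⁻¹ * A t)
    -- control gain quantities
    (M : (t : ℕ) → Matrix (Fin (m t)) (Fin (m t)) ℝ)
    (hM : ∀ t, 1 ≤ t → t ≤ T → M t = (B t)ᵀ * Sm t * B t + R t)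
    (K : (t : ℕ) → Matrix (Fin (m t)) (Fin n) ℝ)
    (hK : ∀ t, 1 ≤ t → t ≤ T → K t = -((M t)⁻¹ * (B t)ᵀ * Sm t * A t))
    (Θ : ℕ → Matrix (Fin n) (Fin n) ℝ)
    (hΘ : ∀ t, 1 ≤ t → t ≤ T → Θ t = (K t)ᵀ * M t * K t)
    -- state-transition products `U_t = A_{t−1}⋯A₁`, `U₁ = 1`
    (U : ℕ → Matrix (Fin n) (Fin n) ℝ)
    (hU1 : U 1 = 1)
    (hUrec : ∀ t, 1 ≤ t → U (t + 1) = A t * U t) :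
    ∑ t ∈ Finset.Icc 1 T, (U t)ᵀ * Θ t * U t =
      (∑ t ∈ Finset.Icc 1 T, (A t * U t)ᵀ * Q t * (A t * U t)) - N 1 :=
  stmt_14_general T m A B Q hQ R hR N Sm hNT hSm hN M hM K hK Θ hΘ U hU1 hUrec
end
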